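/- arXiv:1207.2113 — 6 statements merged into one kernel-verified Lean document; each statement's English description precedes it below -/
import Mathlib

section
/- Let K be a triangulated category with split idempotents and F : K → Ab a homological functor. For every finitely presentable left K-module X (object of (mod K^op)^op), there is a natural isomorphism F*(X) ≅ Hom_{K^op}(X, F), where F* is the exact extension of F to the abelianization. -/
open CategoryTheory CategoryTheory.Limits CategoryTheory.Pretriangulated

universe v u

namespace Statement2

variable (K : Type u) [Category.{v} K] [Preadditive K]

/-- A left `K`-module (i.e. a right `Kᵒᵖ`-module) `X : K ⥤ Ab` is finitely presentable
if it admits an exact sequence `K(K₁,-) ⟶ K(K₀,-) ⟶ X ⟶ 0`. -/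
def IsFinitelyPresentable (X : K ⥤ AddCommGrpCat.{v}) : Prop :=
  ∃ (K₁ K₀ : K) (α : preadditiveCoyoneda.obj (Opposite.op K₁) ⟶
      preadditiveCoyoneda.obj (Opposite.op K₀))
    (π : preadditiveCoyoneda.obj (Opposite.op K₀) ⟶ X) (w : α ≫ π = 0),
    Nonempty (IsColimit (CokernelCofork.ofπ π w))

/-- The category `mod Kᵒᵖ` of finitely presentable left `K`-modules; its opposite
`(mod Kᵒᵖ)ᵒᵖ` is the abelianization of a triangulated category `K`. -/
def ModKop : Type (max u (v + 1)) :=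
  ObjectProperty.FullSubcategory (IsFinitelyPresentable K)

instance : Category (ModKop K) :=
  ObjectProperty.FullSubcategory.category _

lemma coyoneda_isFinitelyPresentable (A : K) :
    IsFinitelyPresentable K (preadditiveCoyoneda.obj (Opposite.op A)) :=
  ⟨A, A, 0, 𝟙 _, by simp, ⟨CokernelCofork.IsColimit.ofId _ rfl⟩⟩

/-- The Yoneda embedding `H_K : K ⥤ (mod Kᵒᵖ)ᵒᵖ`, `A ↦ K(A,-)`. -/
def yonedaFP : K ⥤ (ModKop K)ᵒᵖ where
  obj A := Opposite.op ⟨preadditiveCoyoneda.obj (Opposite.op A),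
    coyoneda_isFinitelyPresentable K A⟩
  map f := (show (_ : ModKop K) ⟶ _ from ObjectProperty.homMk (preadditiveCoyoneda.map f.op)).op
  map_id A := by
    apply Quiver.Hom.unop_inj
    simp [ModKop]
    rfl
  map_comp f g := by
    apply Quiver.Hom.unop_inj
    simp [ModKop]
    rfl

/-!
A finitely presentable `X` has a presentation `K(K₁,-) ⟶ K(K₀,-) ⟶ X ⟶ 0`, which in
`(mod Kᵒᵖ)ᵒᵖ` is a kernel sequence `0 ⟶ X ⟶ H K₀ ⟶ H K₁`. The left exact `F*` turns it into an
exact sequence `0 ⟶ F*(X) ⟶ F(K₀) ⟶ F(K₁)`, and `Hom(-, F)` turns it into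
`0 ⟶ Hom(X, F) ⟶ Hom(K(K₀,-), F) ⟶ Hom(K(K₁,-), F)`. The comparison map sending `a ∈ F*(X)` to
`x ↦ F*(x̂)(a)`, where `x̂ : K(A,-) ⟶ X` is the Yoneda morphism of `x ∈ X(A)`, is natural and is
the additive Yoneda isomorphism on representables, so it is an isomorphism by a diagram chase.
-/
variable {K}

open ZeroObject in
instance [HasZeroObject K] : ObjectProperty.ContainsZero (IsFinitelyPresentable K) where
  exists_zero := ⟨_, Functor.isZero _ fun _ =>
    @AddCommGrpCat.isZero_of_subsingleton _ ⟨(isZero_zero K).eq_of_src⟩,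
    coyoneda_isFinitelyPresentable K 0⟩

instance : Preadditive (ModKop K) :=
  Preadditive.fullSubcategory _

instance [HasZeroObject K] : HasZeroObject (ModKop K) :=
  inferInstanceAs (HasZeroObject (ObjectProperty.FullSubcategory (IsFinitelyPresentable K)))

section AdditiveYoneda

variable {C : Type*} [Category C] [Preadditive C]

lemma Functor.additive_of_epi {F G : C ⥤ AddCommGrpCat.{v}} [F.Additive] (π : F ⟶ G) [Epi π] :
    G.Additive where
  map_add {A B g g'} := by
    ext x
    obtain ⟨u, rfl⟩ := (AddCommGrpCat.epi_iff_surjective (π.app A)).1 inferInstance x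
    simp [← NatTrans.naturality_apply]

def coyonedaHom {F : C ⥤ AddCommGrpCat.{v}} [F.Additive] {A : C} (x : F.obj A) :
    preadditiveCoyoneda.obj (Opposite.op A) ⟶ F where
  app B := AddCommGrpCat.ofHom (AddMonoidHom.mk' (fun (g : A ⟶ B) => F.map g x)
    fun g g' => ConcreteCategory.congr_hom (F.map_add (f := g) (g := g')) x)
  naturality B B' h := AddCommGrpCat.ext fun (g : A ⟶ B) => by
    show F.map (g ≫ h) x = F.map h (F.map g x)
    simp

lemma coyonedaHom_comp {F G : C ⥤ AddCommGrpCat.{v}} [F.Additive] [G.Additive] (m : F ⟶ G)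
    {A : C} (x : F.obj A) :
    coyonedaHom (m.app A x) = coyonedaHom x ≫ m :=
  NatTrans.ext (funext fun B => AddCommGrpCat.ext fun (g : A ⟶ B) =>
    (NatTrans.naturality_apply m g x).symm)

lemma coyonedaHom_map {F : C ⥤ AddCommGrpCat.{v}} [F.Additive] {A B : C} (h : A ⟶ B)
    (x : F.obj A) :
    coyonedaHom (F.map h x) = preadditiveCoyoneda.map h.op ≫ coyonedaHom x :=
  NatTrans.ext (funext fun B' => AddCommGrpCat.ext fun (g : B ⟶ B') => by
    show F.map g (F.map h x) = F.map (h ≫ g) x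
    simp)

lemma coyonedaHom_app {F : C ⥤ AddCommGrpCat.{v}} [F.Additive] {A₀ A : C}
    (p : preadditiveCoyoneda.obj (Opposite.op A₀) ⟶ F) (t : A₀ ⟶ A) :
    coyonedaHom (p.app A t) = preadditiveCoyoneda.map t.op ≫ p :=
  NatTrans.ext (funext fun B => AddCommGrpCat.ext fun (g : A ⟶ B) =>
    (NatTrans.naturality_apply p g t).symm)

lemma coyoneda_app_apply {F : C ⥤ AddCommGrpCat.{v}} {A B : C}
    (ψ : preadditiveCoyoneda.obj (Opposite.op A) ⟶ F) (g : A ⟶ B) :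
    ψ.app B g = F.map g (ψ.app A (𝟙 A)) :=
  (congrArg (ψ.app B) (Category.id_comp g).symm).trans (NatTrans.naturality_apply ψ g (𝟙 A))

lemma coyoneda_hom_ext {F : C ⥤ AddCommGrpCat.{v}} {A : C}
    {ψ ψ' : preadditiveCoyoneda.obj (Opposite.op A) ⟶ F} (h : ψ.app A (𝟙 A) = ψ'.app A (𝟙 A)) :
    ψ = ψ' :=
  NatTrans.ext (funext fun B => AddCommGrpCat.ext fun (g : A ⟶ B) => by
    rw [coyoneda_app_apply ψ, coyoneda_app_apply ψ', h])

end AdditiveYoneda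

section LeftExact

variable {C : Type*} [Category C] [HasZeroMorphisms C] (G : Cᵒᵖ ⥤ AddCommGrpCat.{v})
  [PreservesFiniteLimits G] [G.PreservesZeroMorphisms]
  {X Y Z : C} {f : X ⟶ Y} {g : Y ⟶ Z} {w : f ≫ g = 0}

lemma injective_map_op_of_isColimit_cokernelCofork (hc : IsColimit (CokernelCofork.ofπ g w)) :
    Function.Injective (G.map g.op) := by
  have : Mono (G.map g.op) :=
    mono_of_isLimit_fork (isLimitForkMapOfIsLimit' G _ (CokernelCofork.IsColimit.ofπOp g w hc))
  exact (AddCommGrpCat.mono_iff_injective _).1 this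

lemma exists_map_op_eq_of_isColimit_cokernelCofork (hc : IsColimit (CokernelCofork.ofπ g w))
    (y : G.obj (Opposite.op Y)) (hy : G.map f.op y = 0) :
    ∃ z, G.map g.op z = y := by
  let S := ShortComplex.mk (G.map g.op) (G.map f.op)
    (by rw [← G.map_comp, ← op_comp, w, op_zero, G.map_zero])
  have hS : S.Exact :=
    S.exact_of_f_is_kernel (isLimitForkMapOfIsLimit' G _ (CokernelCofork.IsColimit.ofπOp g w hc))
  exact S.ab_exact_iff.1 hS y hy

end LeftExact

instance (X : ModKop K) : X.obj.Additive := by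
  obtain ⟨K₁, K₀, α, π, w, ⟨hc⟩⟩ := X.property
  have : Epi π := epi_of_isColimit_cofork hc
  exact Functor.additive_of_epi π

lemma ModKop.hom_ext {X Y : ModKop K} {f g : X ⟶ Y} (h : f.hom = g.hom) : f = g :=
  ObjectProperty.hom_ext _ h

def ModKop.homMk {X Y : ModKop K} (f : X.obj ⟶ Y.obj) : X ⟶ Y :=
  ObjectProperty.homMk f

def yonedaHom {X : ModKop K} {A : K} (x : X.obj.obj A) : ((yonedaFP K).obj A).unop ⟶ X :=
  ModKop.homMk (coyonedaHom x)

lemma yonedaHom_comp {X Y : ModKop K} (m : X ⟶ Y) {A : K} (x : X.obj.obj A) :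
    yonedaHom (m.hom.app A x) = yonedaHom x ≫ m :=
  ModKop.hom_ext (coyonedaHom_comp m.hom x)

lemma yonedaHom_map {X : ModKop K} {A B : K} (h : A ⟶ B) (x : X.obj.obj A) :
    yonedaHom (X.obj.map h x) = ((yonedaFP K).map h).unop ≫ yonedaHom x :=
  ModKop.hom_ext (coyonedaHom_map h x)

lemma yonedaHom_app {X : ModKop K} {K₀ A : K} (p : ((yonedaFP K).obj K₀).unop ⟶ X)
    (t : K₀ ⟶ A) :
    yonedaHom (p.hom.app A t) = ((yonedaFP K).map t).unop ≫ p :=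
  ModKop.hom_ext (coyonedaHom_app p.hom t)

lemma ModKop.exists_presentation (X : ModKop K) :
    ∃ (K₁ K₀ : K) (α : ((yonedaFP K).obj K₁).unop ⟶ ((yonedaFP K).obj K₀).unop)
      (π : ((yonedaFP K).obj K₀).unop ⟶ X) (w : α ≫ π = 0),
      Epi π.hom ∧ Nonempty (IsColimit (CokernelCofork.ofπ π w)) := by
  obtain ⟨K₁, K₀, α, π, w, ⟨hc⟩⟩ := X.property
  have wm : ModKop.homMk (X := ((yonedaFP K).obj K₁).unop) (Y := ((yonedaFP K).obj K₀).unop) α ≫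
      ModKop.homMk (X := ((yonedaFP K).obj K₀).unop) (Y := X) π = 0 :=
    ModKop.hom_ext w
  -- `ModKop K` is not reducible, so the reflection instance is supplied by hand.
  have hι : ReflectsColimitsOfSize.{0, 0} (ObjectProperty.ι (IsFinitelyPresentable K)) :=
    inferInstance
  exact ⟨K₁, K₀, _, _, wm, epi_of_isColimit_cofork hc,
    ⟨@isColimitOfReflects _ _ _ _ _ _ _ (ObjectProperty.ι _) _
      ((isColimitMapCoconeCoforkEquiv' (ObjectProperty.ι _) wm).symm hc)
      (hι.reflectsColimitsOfShape (J := WalkingParallelPair)).reflectsColimit⟩⟩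

section Comparison

variable (F : K ⥤ AddCommGrpCat.{v}) (Fs : (ModKop K)ᵒᵖ ⥤ AddCommGrpCat.{v})
  (hFs : yonedaFP K ⋙ Fs ≅ F)

def comparisonApp (X : (ModKop K)ᵒᵖ) (a : Fs.obj X) {A : K} (x : X.unop.obj.obj A) : F.obj A :=
  hFs.hom.app A (Fs.map (yonedaHom x).op a)

lemma comparisonApp_app (X : (ModKop K)ᵒᵖ) (a : Fs.obj X) {K₀ A : K}
    (p : ((yonedaFP K).obj K₀).unop ⟶ X.unop) (t : K₀ ⟶ A) :
    comparisonApp F Fs hFs X a (p.hom.app A t) = F.map t (hFs.hom.app K₀ (Fs.map p.op a)) := by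
  rw [comparisonApp, yonedaHom_app, op_comp, Quiver.Hom.op_unop, Fs.map_comp,
    ConcreteCategory.comp_apply]
  exact NatTrans.naturality_apply hFs.hom t _

lemma comparisonApp_map (X : (ModKop K)ᵒᵖ) (a : Fs.obj X) {A B : K} (h : A ⟶ B)
    (x : X.unop.obj.obj A) :
    comparisonApp F Fs hFs X a (X.unop.obj.map h x) = F.map h (comparisonApp F Fs hFs X a x) := by
  rw [comparisonApp, yonedaHom_map, op_comp, Quiver.Hom.op_unop, Fs.map_comp,
    ConcreteCategory.comp_apply]
  exact NatTrans.naturality_apply hFs.hom h _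

variable [F.Additive]

lemma comparisonApp_add (X : (ModKop K)ᵒᵖ) (a : Fs.obj X) {A : K} (x y : X.unop.obj.obj A) :
    comparisonApp F Fs hFs X a (x + y) =
      comparisonApp F Fs hFs X a x + comparisonApp F Fs hFs X a y := by
  obtain ⟨K₁, K₀, α, π, w, hπ, -⟩ := X.unop.exists_presentation
  obtain ⟨u, rfl⟩ := (AddCommGrpCat.epi_iff_surjective (π.hom.app A)).1 inferInstance x
  obtain ⟨u', rfl⟩ := (AddCommGrpCat.epi_iff_surjective (π.hom.app A)).1 inferInstance y
  have h := comparisonApp_app F Fs hFs X a π (A := A)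
  calc comparisonApp F Fs hFs X a (π.hom.app A u + π.hom.app A u')
      = comparisonApp F Fs hFs X a (π.hom.app A (u + u')) := congrArg _ (map_add _ u u').symm
    _ = F.map (u + u') _ := h (u + u')
    _ = F.map u _ + F.map u' _ := ConcreteCategory.congr_hom (F.map_add (f := u) (g := u')) _
    _ = _ := congrArg₂ (· + ·) (h u).symm (h u').symm

def comparison (X : (ModKop K)ᵒᵖ) : Fs.obj X →+ (X.unop.obj ⟶ F) :=
  AddMonoidHom.mk'
    (fun a =>
      { app A := AddCommGrpCat.ofHom
          (AddMonoidHom.mk' (comparisonApp F Fs hFs X a) (comparisonApp_add F Fs hFs X a))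
        naturality A B h := AddCommGrpCat.ext (comparisonApp_map F Fs hFs X a h) })
    (fun a b => by
      ext A x
      simp [comparisonApp])

lemma comparison_map {X Y : (ModKop K)ᵒᵖ} (g : X ⟶ Y) (a : Fs.obj X) :
    comparison F Fs hFs Y (Fs.map g a) = g.unop.hom ≫ comparison F Fs hFs X a := by
  refine NatTrans.ext (funext fun A => AddCommGrpCat.ext fun x => ?_)
  show hFs.hom.app A (Fs.map (yonedaHom x).op (Fs.map g a)) =
    hFs.hom.app A (Fs.map (yonedaHom (g.unop.hom.app A x)).op a)
  rw [yonedaHom_comp, op_comp, Quiver.Hom.op_unop, Fs.map_comp, ConcreteCategory.comp_apply]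

lemma comparison_app_id {A : K} (a : Fs.obj ((yonedaFP K).obj A)) :
    (comparison F Fs hFs _ a).app A (𝟙 A) = hFs.hom.app A a :=
  (comparisonApp_app F Fs hFs _ a (𝟙 _) (𝟙 A)).trans (by simp)

lemma comparison_bijective_yoneda (A : K) :
    Function.Bijective (comparison F Fs hFs ((yonedaFP K).obj A)) := by
  have hinj : Function.Injective (hFs.hom.app A) :=
    (AddCommGrpCat.mono_iff_injective _).1 inferInstance
  refine ⟨fun a a' h => hinj ?_, fun ψ => ⟨hFs.inv.app A (ψ.app A (𝟙 A)), ?_⟩⟩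
  · simpa only [comparison_app_id] using congrArg (fun ψ => ψ.app A (𝟙 A)) h
  · exact coyoneda_hom_ext ((comparison_app_id F Fs hFs _).trans
      (ConcreteCategory.congr_hom (hFs.inv_hom_id_app A) _))

variable [HasZeroObject K] [PreservesFiniteLimits Fs]

lemma comparison_injective (X : (ModKop K)ᵒᵖ) : Function.Injective (comparison F Fs hFs X) := by
  obtain ⟨K₁, K₀, α, π, w, -, ⟨hc⟩⟩ := X.unop.exists_presentation
  intro a a' h
  apply injective_map_op_of_isColimit_cokernelCofork Fs hc
  apply (comparison_bijective_yoneda F Fs hFs K₀).injective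
  rw [comparison_map, comparison_map, h]

lemma comparison_surjective (X : (ModKop K)ᵒᵖ) : Function.Surjective (comparison F Fs hFs X) := by
  obtain ⟨K₁, K₀, α, π, w, hπ, ⟨hc⟩⟩ := X.unop.exists_presentation
  intro ψ
  obtain ⟨z, hz⟩ := (comparison_bijective_yoneda F Fs hFs K₀).surjective (π.hom ≫ ψ)
  have hz0 : Fs.map α.op z = 0 := by
    apply (comparison_bijective_yoneda F Fs hFs K₁).injective
    have hαπ : α.hom ≫ π.hom = 0 := congrArg InducedCategory.Hom.hom w
    rw [comparison_map, hz, map_zero, ← Category.assoc]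
    exact hαπ ▸ zero_comp
  obtain ⟨a, rfl⟩ := exists_map_op_eq_of_isColimit_cokernelCofork Fs hc z hz0
  exact ⟨a, (cancel_epi π.hom).1 (by rw [← hz, comparison_map]; rfl)⟩

end Comparison

/-- Let `K` be a triangulated category with split idempotents and
`F : K ⥤ Ab` a homological functor. For the exact extension
`F* : (mod Kᵒᵖ)ᵒᵖ ⥤ Ab` of `F` (an exact functor with `F ≅ F* ∘ H_K`), there is a natural
isomorphism `F*(X) ≅ Hom_{Kᵒᵖ}(X, F)` for every finitely presentable left `K`-module `X`. -/
theorem statement2 [HasZeroObject K] [HasShift K ℤ]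
    [∀ n : ℤ, (shiftFunctor K n).Additive] [Pretriangulated K] [IsIdempotentComplete K]
    (F : K ⥤ AddCommGrpCat.{v}) [F.IsHomological]
    (Fs : (ModKop K)ᵒᵖ ⥤ AddCommGrpCat.{v})
    [PreservesFiniteLimits Fs] [PreservesFiniteColimits Fs]
    (hFs : yonedaFP K ⋙ Fs ≅ F) :
    ∃ e : ∀ X : (ModKop K)ᵒᵖ, Fs.obj X ≃+ (X.unop.obj ⟶ F),
      ∀ (X Y : (ModKop K)ᵒᵖ) (g : X ⟶ Y) (a : Fs.obj X),
        e Y (Fs.map g a) = (show Y.unop.obj ⟶ X.unop.obj from g.unop.hom) ≫ e X a :=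
  ⟨fun X => AddEquiv.ofBijective (comparison F Fs hFs X)
      ⟨comparison_injective F Fs hFs X, comparison_surjective F Fs hFs X⟩,
    fun _ _ g a => comparison_map F Fs hFs g a⟩

end Statement2
end

section
/- Let K be a triangulated category with split idempotents. A homological functor F : K → Ab is representable (i.e., naturally isomorphic to K(S,-) for some object S) if and only if its exact extension F* : (mod K^op)^op → Ab to the abelianization is representable. -/
/-!
Every object `Y` of `(mod Kᵒᵖ)ᵒᵖ` is the kernel of a morphism `H K₀ ⟶ H K₁` between
representables, obtained from a presentation `K(K₁,-) ⟶ K(K₀,-) ⟶ Y ⟶ 0`.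

If `F ≅ K(S,-)`, the element of `F*(H S)` corresponding to `𝟙 S` induces a natural map
`Hom(H S, -) ⟶ F*`. By the Yoneda lemma it is bijective on representables, hence on all objects,
because both functors are left exact.

Conversely, if `F*` is corepresented by `X`, then `F ≅ F* ∘ H ≅ Hom(X, H -) ≅ X` as set-valued
functors compatibly with zero, so `F` is finitely presented: `F = coker K(f,-)` for some
`f : K₀ ⟶ K₁`. Complete `f` to a triangle `D ⟶ K₀ ⟶ K₁ ⟶ D[1]`. Since `F` is homological, the
projection `K(K₀,-) ⟶ F` lifts along `K(D,-) ⟶ K(K₀,-)`, and this exhibits `F` as a retract of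
`K(D,-)`. Idempotents split in `K`, so `F` is corepresentable.
-/

open CategoryTheory CategoryTheory.Limits CategoryTheory.Pretriangulated

universe v u

namespace Statement3

variable (K : Type u) [Category.{v} K] [Preadditive K]

/-- A left `K`-module (i.e. a right `Kᵒᵖ`-module) `X : K ⥤ Ab` is finitely presentable
if it admits an exact sequence `K(K₁,-) ⟶ K(K₀,-) ⟶ X ⟶ 0`. -/
def IsFinitelyPresentable (X : K ⥤ AddCommGrpCat.{v}) : Prop :=
  ∃ (K₁ K₀ : K) (α : preadditiveCoyoneda.obj (Opposite.op K₁) ⟶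
      preadditiveCoyoneda.obj (Opposite.op K₀))
    (π : preadditiveCoyoneda.obj (Opposite.op K₀) ⟶ X) (w : α ≫ π = 0),
    Nonempty (IsColimit (CokernelCofork.ofπ π w))

/-- The category `mod Kᵒᵖ` of finitely presentable left `K`-modules; its opposite
`(mod Kᵒᵖ)ᵒᵖ` is the abelianization of a triangulated category `K`. -/
def ModKop : Type (max u (v + 1)) :=
  ObjectProperty.FullSubcategory (IsFinitelyPresentable K)

instance : Category (ModKop K) :=
  ObjectProperty.FullSubcategory.category _

lemma coyoneda_isFinitelyPresentable (A : K) :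
    IsFinitelyPresentable K (preadditiveCoyoneda.obj (Opposite.op A)) :=
  ⟨A, A, 0, 𝟙 _, by simp, ⟨CokernelCofork.IsColimit.ofId _ rfl⟩⟩

/-- The Yoneda embedding `H_K : K ⥤ (mod Kᵒᵖ)ᵒᵖ`, `A ↦ K(A,-)`. -/
def yonedaFP : K ⥤ (ModKop K)ᵒᵖ where
  obj A := Opposite.op ⟨preadditiveCoyoneda.obj (Opposite.op A),
    coyoneda_isFinitelyPresentable K A⟩
  map f := (show (_ : ModKop K) ⟶ _ from ObjectProperty.homMk (preadditiveCoyoneda.map f.op)).op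
  map_id A := by
    apply Quiver.Hom.unop_inj
    apply ObjectProperty.hom_ext
    simp [ModKop, ObjectProperty.homMk]
    rfl
  map_comp f g := by
    apply Quiver.Hom.unop_inj
    apply ObjectProperty.hom_ext
    simp [ModKop, ObjectProperty.homMk]
    rfl

open Opposite

section PreadditiveCoyoneda

variable {C : Type*} [Category.{v} C] [Preadditive C]

lemma preadditiveCoyoneda_hom_app_eq {G : C ⥤ AddCommGrpCat.{v}} {A W : C}
    (τ : preadditiveCoyoneda.obj (op A) ⟶ G) (g : A ⟶ W) :
    τ.app W g = G.map g (τ.app A (𝟙 A)) := by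
  rw [← NatTrans.naturality_apply τ g (𝟙 A)]
  exact congrArg (τ.app W) (Category.id_comp g).symm

noncomputable def preadditiveCoyonedaEquiv (G : C ⥤ AddCommGrpCat.{v}) [G.Additive] (A : C) :
    (preadditiveCoyoneda.obj (op A) ⟶ G) ≃ G.obj A where
  toFun τ := τ.app A (𝟙 A)
  invFun x :=
    { app W := AddCommGrpCat.ofHom
        { toFun g := G.map g x
          map_zero' := by change G.map (0 : A ⟶ W) x = 0; rw [G.map_zero]; rfl
          map_add' := fun (g h : A ⟶ W) => by
            change G.map (g + h : A ⟶ W) x = G.map g x + G.map h x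
            rw [G.map_add]; rfl }
      naturality W W' k := by
        ext (g : A ⟶ W)
        exact (G.map_comp_apply g k x) }
  left_inv τ := by
    ext W (g : A ⟶ W)
    exact (preadditiveCoyoneda_hom_app_eq τ g).symm
  right_inv x := by
    change G.map (𝟙 A) x = x
    simp

lemma preadditiveCoyonedaEquiv_comp (G : C ⥤ AddCommGrpCat.{v}) [G.Additive] {A B : C}
    (g : A ⟶ B) (τ : preadditiveCoyoneda.obj (op A) ⟶ G) :
    preadditiveCoyonedaEquiv G B (preadditiveCoyoneda.map g.op ≫ τ) =
      G.map g (preadditiveCoyonedaEquiv G A τ) := by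
  change τ.app B (g ≫ 𝟙 B) = _
  rw [Category.comp_id, preadditiveCoyoneda_hom_app_eq]
  rfl

end PreadditiveCoyoneda

section PointwiseCokernel

variable {C : Type*} [Category.{v} C] {P Q R : C ⥤ AddCommGrpCat.{v}} {α : P ⟶ Q} {π : Q ⟶ R}

lemma nonempty_isColimit_cokernelCofork_iff (w : α ≫ π = 0) :
    Nonempty (IsColimit (CokernelCofork.ofπ π w)) ↔
      ∀ W, Function.Surjective (π.app W) ∧ ∀ x, π.app W x = 0 → ∃ m, α.app W m = x := by
  have w_app (W : C) : α.app W ≫ π.app W = 0 := by rw [← NatTrans.comp_app, w]; rfl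
  constructor
  · rintro ⟨h⟩ W
    have hW := isColimitCoforkMapOfIsColimit' ((evaluation C _).obj W) w h
    refine ⟨(AddCommGrpCat.epi_iff_surjective _).1 (epi_of_isColimit_cofork hW), ?_⟩
    exact (ShortComplex.ab_exact_iff (.mk _ _ (w_app W))).1
      (ShortComplex.exact_of_g_is_cokernel _ hW)
  · intro h
    refine ⟨evaluationJointlyReflectsColimits _ fun W => ?_⟩
    have : Epi (π.app W) := (AddCommGrpCat.epi_iff_surjective _).2 (h W).1
    have hS := (ShortComplex.ab_exact_iff (.mk _ _ (w_app W))).2 (h W).2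
    exact (isColimitMapCoconeCoforkEquiv' ((evaluation C _).obj W) w).symm hS.gIsCokernel

end PointwiseCokernel

instance Functor.essImage_isStableUnderRetracts {C D : Type*} [Category C] [Category D]
    [IsIdempotentComplete C] (G : C ⥤ D) [G.Full] [G.Faithful] :
    G.essImage.IsStableUnderRetracts where
  of_retract {X Y} h hY := by
    obtain ⟨Y', ⟨e⟩⟩ := hY
    let p : Y' ⟶ Y' := G.preimage (e.hom ≫ h.r ≫ h.i ≫ e.inv)
    have hGp : G.map p = e.hom ≫ h.r ≫ h.i ≫ e.inv := G.map_preimage _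
    have hp : p ≫ p = p := G.map_injective (by simp [hGp])
    obtain ⟨S, i, r, hir, hri⟩ := IsIdempotentComplete.idempotents_split Y' p hp
    refine ⟨S, ⟨⟨G.map i ≫ e.hom ≫ h.r, h.i ≫ e.inv ≫ G.map r, ?_, ?_⟩⟩⟩
    · have : G.map i ≫ G.map p ≫ G.map r = 𝟙 _ := by
        rw [← G.map_comp, ← G.map_comp, ← hri]
        simp [hir]
      simpa [hGp] using this
    · simp only [Category.assoc]
      rw [← G.map_comp_assoc, hri, hGp]
      simp

lemma Functor.additive_of_surjective_app {C : Type*} [Category C] [Preadditive C]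
    {G M : C ⥤ AddCommGrpCat.{v}} [G.Additive] (π : G ⟶ M)
    (hπ : ∀ W, Function.Surjective (π.app W)) : M.Additive where
  map_add {A B f g} := by
    ext x
    obtain ⟨y, rfl⟩ := hπ A x
    change M.map (f + g) (π.app A y) = M.map f (π.app A y) + M.map g (π.app A y)
    simp only [← NatTrans.naturality_apply, G.map_add]
    exact map_add (π.app B).hom _ _

section FinitelyPresentable

variable {K}

lemma isFinitelyPresentable_of_equiv {M F : K ⥤ AddCommGrpCat.{v}} [F.Additive]
    (hM : IsFinitelyPresentable K M) (γ : ∀ W, M.obj W ≃ F.obj W)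
    (hγ : ∀ {W W'} (φ : W ⟶ W') x, γ W' (M.map φ x) = F.map φ (γ W x))
    (hγ₀ : ∀ W, γ W 0 = 0) :
    IsFinitelyPresentable K F := by
  obtain ⟨K₁, K₀, α, π, w, hc⟩ := hM
  rw [nonempty_isColimit_cokernelCofork_iff] at hc
  let π' := (preadditiveCoyonedaEquiv F K₀).symm (γ K₀ (π.app K₀ (𝟙 K₀)))
  have hπ' (W : K) (g : (preadditiveCoyoneda.obj (op K₀)).obj W) :
      π'.app W g = γ W (π.app W g) :=
    ((congrArg (γ W) (preadditiveCoyoneda_hom_app_eq π g)).trans (hγ g _)).symm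
  have w' : α ≫ π' = 0 := by
    ext W m
    change π'.app W (α.app W m) = 0
    rw [hπ', ← ConcreteCategory.comp_apply, ← NatTrans.comp_app, w]
    exact hγ₀ W
  refine ⟨K₁, K₀, α, π', w', (nonempty_isColimit_cokernelCofork_iff w').2 fun W => ⟨?_, ?_⟩⟩
  · intro y
    obtain ⟨g, hg⟩ := (hc W).1 ((γ W).symm y)
    exact ⟨g, by rw [hπ', hg, Equiv.apply_symm_apply]⟩
  · intro g hg
    rw [hπ', ← hγ₀ W] at hg
    exact (hc W).2 g ((γ W).injective hg)

end FinitelyPresentable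

section ModKop

open ZeroObject

variable {K}

instance : Preadditive (ModKop K) :=
  inferInstanceAs (Preadditive (ObjectProperty.FullSubcategory _))

instance [HasZeroObject K] : ObjectProperty.ContainsZero (IsFinitelyPresentable K) where
  exists_zero := ⟨_, preadditiveCoyoneda.map_isZero (isZero_zero K).op,
    coyoneda_isFinitelyPresentable K 0⟩

instance [HasZeroObject K] : HasZeroObject (ModKop K) :=
  inferInstanceAs (HasZeroObject (ObjectProperty.FullSubcategory _))

/-- `ModKop K` is not reducible, so instances about `ObjectProperty.ι` are not found on it. -/
def ModKop.ι : ModKop K ⥤ K ⥤ AddCommGrpCat.{v} := ObjectProperty.ι _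

instance : (ModKop.ι (K := K)).Full := inferInstanceAs (ObjectProperty.ι _).Full

instance : (ModKop.ι (K := K)).Faithful := inferInstanceAs (ObjectProperty.ι _).Faithful

lemma ModKop.exists_isLimit_kernelFork (Y : (ModKop K)ᵒᵖ) :
    ∃ (K₀ K₁ : K) (ι : Y ⟶ (yonedaFP K).obj K₀) (g : (yonedaFP K).obj K₀ ⟶ (yonedaFP K).obj K₁)
      (w : ι ≫ g = 0), Nonempty (IsLimit (KernelFork.ofι ι w)) := by
  obtain ⟨K₁, K₀, α, π, w, ⟨hc⟩⟩ := Y.unop.property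
  let πM : ((yonedaFP K).obj K₀).unop ⟶ Y.unop := ObjectProperty.homMk π
  let αM : ((yonedaFP K).obj K₁).unop ⟶ ((yonedaFP K).obj K₀).unop := ObjectProperty.homMk α
  have wM : αM ≫ πM = 0 := ObjectProperty.hom_ext _ w
  have hcM : IsColimit (CokernelCofork.ofπ πM wM) :=
    isColimitOfReflects ModKop.ι ((isColimitMapCoconeCoforkEquiv' _ wM).symm hc)
  exact ⟨K₀, K₁, πM.op, αM.op, _, ⟨CokernelCofork.IsColimit.ofπOp πM wM hcM⟩⟩

lemma ModKop.additive (M : ModKop K) : M.obj.Additive := by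
  obtain ⟨K₁, K₀, α, π, w, hc⟩ := M.property
  exact Functor.additive_of_surjective_app π
    fun W => ((nonempty_isColimit_cokernelCofork_iff w).1 hc W).1

noncomputable def ModKop.homYonedaFPEquiv (X : (ModKop K)ᵒᵖ) (W : K) :
    (X ⟶ (yonedaFP K).obj W) ≃ X.unop.obj.obj W :=
  (opEquiv _ _).trans ((ObjectProperty.fullyFaithfulι _).homEquiv.trans
    (@preadditiveCoyonedaEquiv _ _ _ X.unop.obj X.unop.additive W))

lemma ModKop.homYonedaFPEquiv_apply (X : (ModKop K)ᵒᵖ) {W : K} (h : X ⟶ (yonedaFP K).obj W) :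
    homYonedaFPEquiv X W h = h.unop.hom.app W (𝟙 W) := rfl

lemma ModKop.homYonedaFPEquiv_comp (X : (ModKop K)ᵒᵖ) {W W' : K}
    (h : X ⟶ (yonedaFP K).obj W) (φ : W ⟶ W') :
    homYonedaFPEquiv X W' (h ≫ (yonedaFP K).map φ) = X.unop.obj.map φ (homYonedaFPEquiv X W h) :=
  @preadditiveCoyonedaEquiv_comp _ _ _ _ X.unop.additive _ _ φ h.unop.hom

lemma ModKop.homYonedaFPEquiv_yonedaFP_map {A W : K} (φ : A ⟶ W) :
    homYonedaFPEquiv ((yonedaFP K).obj A) W ((yonedaFP K).map φ) = φ :=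
  Category.comp_id φ

lemma ModKop.homYonedaFPEquiv_zero (X : (ModKop K)ᵒᵖ) (W : K) :
    homYonedaFPEquiv X W 0 = 0 := by
  rw [homYonedaFPEquiv_apply]
  rfl

noncomputable def ModKop.fullyFaithfulYonedaFP : (yonedaFP K).FullyFaithful where
  preimage {_ W} h := homYonedaFPEquiv _ W h
  map_preimage _ := (homYonedaFPEquiv _ _).injective (homYonedaFPEquiv_yonedaFP_map _)
  preimage_map := homYonedaFPEquiv_yonedaFP_map

end ModKop

lemma bijective_map_apply_of_isLimit {C : Type*} [Category C] [HasZeroMorphisms C]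
    (G : C ⥤ AddCommGrpCat.{v}) [G.PreservesZeroMorphisms] [G.PreservesMonomorphisms]
    {X Y A B : C} (ξ : G.obj X) {ι : Y ⟶ A} {g : A ⟶ B} {w : ι ≫ g = 0}
    (hι : IsLimit (KernelFork.ofι ι w))
    (hA : Function.Bijective fun f : X ⟶ A => G.map f ξ)
    (hB : Function.Injective fun f : X ⟶ B => G.map f ξ) :
    Function.Bijective fun f : X ⟶ Y => G.map f ξ := by
  have : Mono ι := mono_of_isLimit_fork hι
  have hGι : Function.Injective (G.map ι) :=
    (AddCommGrpCat.mono_iff_injective _).1 inferInstance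
  refine ⟨fun f₁ f₂ hf => ?_, fun y => ?_⟩
  · refine (cancel_mono ι).1 (hA.1 ?_)
    simp only [G.map_comp, ConcreteCategory.comp_apply]
    exact congrArg (G.map ι) hf
  · obtain ⟨h, hh : G.map h ξ = G.map ι y⟩ := hA.2 (G.map ι y)
    have hhg : h ≫ g = 0 := hB <| by
      change G.map (h ≫ g) ξ = G.map 0 ξ
      rw [G.map_comp, ConcreteCategory.comp_apply, hh, ← ConcreteCategory.comp_apply,
        ← G.map_comp, w, G.map_zero, G.map_zero]
      rfl
    obtain ⟨f, hf : f ≫ ι = h⟩ := KernelFork.IsLimit.lift' hι h hhg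
    refine ⟨f, hGι ?_⟩
    simp only [← hh, ← hf, G.map_comp, ConcreteCategory.comp_apply]

section Abelianization

variable {K} [HasZeroObject K] (F : K ⥤ AddCommGrpCat.{v})
  (Fs : (ModKop K)ᵒᵖ ⥤ AddCommGrpCat.{v}) [PreservesFiniteLimits Fs]

noncomputable def corepresentableByOfIso (hFs : yonedaFP K ⋙ Fs ≅ F) {S : K}
    (σ : F ≅ preadditiveCoyoneda.obj (op S)) :
    (Fs ⋙ forget AddCommGrpCat).CorepresentableBy ((yonedaFP K).obj S) :=
  let ξ : Fs.obj ((yonedaFP K).obj S) := hFs.inv.app S (σ.inv.app S (𝟙 S))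
  have hrep (W : K) :
      Function.Bijective fun h : (yonedaFP K).obj S ⟶ (yonedaFP K).obj W => Fs.map h ξ := by
    have hcomp : (fun h => Fs.map h ξ) ∘ (yonedaFP K).map = hFs.inv.app W ∘ σ.inv.app W := by
      funext φ
      calc (yonedaFP K ⋙ Fs).map φ (hFs.inv.app S (σ.inv.app S (𝟙 S)))
          = hFs.inv.app W (F.map φ (σ.inv.app S (𝟙 S))) :=
            (NatTrans.naturality_apply hFs.inv φ _).symm
        _ = hFs.inv.app W (σ.inv.app W ((preadditiveCoyoneda.obj (op S)).map φ (𝟙 S))) :=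
            congrArg _ (NatTrans.naturality_apply σ.inv φ _).symm
        _ = hFs.inv.app W (σ.inv.app W φ) := congrArg _ (congrArg _ (Category.id_comp φ))
    refine (Function.Bijective.of_comp_iff _
      (ModKop.fullyFaithfulYonedaFP.map_bijective S W)).1 ?_
    rw [hcomp]
    exact (ConcreteCategory.bijective_of_isIso _).comp (ConcreteCategory.bijective_of_isIso _)
  have hbij (Y : (ModKop K)ᵒᵖ) :
      Function.Bijective fun f : (yonedaFP K).obj S ⟶ Y => Fs.map f ξ := by
    obtain ⟨K₀, K₁, ι, g, w, ⟨hι⟩⟩ := ModKop.exists_isLimit_kernelFork Y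
    exact bijective_map_apply_of_isLimit Fs ξ hι (hrep K₀) (hrep K₁).1
  { homEquiv := Equiv.ofBijective _ (hbij _)
    homEquiv_comp := fun g f => Fs.map_comp_apply f g ξ }

lemma isFinitelyPresentable_of_corepresentableBy [F.Additive] (hFs : yonedaFP K ⋙ Fs ≅ F)
    {X : (ModKop K)ᵒᵖ} (c : (Fs ⋙ forget AddCommGrpCat).CorepresentableBy X) :
    IsFinitelyPresentable K F := by
  refine isFinitelyPresentable_of_equiv X.unop.property (fun W =>
    (ModKop.homYonedaFPEquiv X W).symm.trans
      (c.homEquiv.trans ((forget AddCommGrpCat).mapIso (hFs.app W)).toEquiv)) ?_ ?_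
  · intro W W' φ x
    have : (ModKop.homYonedaFPEquiv X W').symm (X.unop.obj.map φ x) =
        (ModKop.homYonedaFPEquiv X W).symm x ≫ (yonedaFP K).map φ := by
      rw [Equiv.symm_apply_eq, ModKop.homYonedaFPEquiv_comp, Equiv.apply_symm_apply]
    simp only [Equiv.trans_apply, this, c.homEquiv_comp]
    exact NatTrans.naturality_apply hFs.hom φ _
  · intro W
    have : (ModKop.homYonedaFPEquiv X W).symm 0 = 0 := by
      rw [Equiv.symm_apply_eq, ModKop.homYonedaFPEquiv_zero]
    simp only [Equiv.trans_apply, this]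
    rw [c.homEquiv_eq, Functor.comp_map, Functor.map_zero]
    exact map_zero (hFs.hom.app W).hom

end Abelianization

section Triangulated

variable {K} [HasZeroObject K] [HasShift K ℤ] [∀ n : ℤ, (shiftFunctor K n).Additive]
  [Pretriangulated K] [IsIdempotentComplete K]

lemma preadditiveCoyoneda_essImage_of_isFinitelyPresentable (F : K ⥤ AddCommGrpCat.{v})
    [F.IsHomological] (hF : IsFinitelyPresentable K F) : preadditiveCoyoneda.essImage F := by
  obtain ⟨K₁, K₀, α, π, w, ⟨hc⟩⟩ := hF
  obtain ⟨f, rfl⟩ := preadditiveCoyoneda.map_surjective α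
  obtain ⟨D, u, δ, hT⟩ := distinguished_cocone_triangle₁ f.unop
  obtain ⟨q, hq⟩ : ∃ q, F.map u q = preadditiveCoyonedaEquiv F K₀ π := by
    refine (ShortComplex.ab_exact_iff _).1 (F.map_distinguished_exact _ hT) _ ?_
    change F.map f.unop (preadditiveCoyonedaEquiv F K₀ π) = 0
    rw [← preadditiveCoyonedaEquiv_comp, Quiver.Hom.op_unop, w]
    rfl
  let ρ := (preadditiveCoyonedaEquiv F D).symm q
  have hρ : preadditiveCoyoneda.map u.op ≫ ρ = π :=
    (preadditiveCoyonedaEquiv F K₀).injective <| by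
      rw [preadditiveCoyonedaEquiv_comp, Equiv.apply_symm_apply, hq]
  obtain ⟨ι, hι⟩ := CokernelCofork.IsColimit.desc' hc (preadditiveCoyoneda.map u.op) <| by
    have huf : u ≫ f.unop = 0 := comp_distTriang_mor_zero₁₂ _ hT
    rw [← Functor.map_comp, show f ≫ u.op = (u ≫ f.unop).op from rfl, huf, op_zero,
      Functor.map_zero]
  have hιρ : ι ≫ ρ = 𝟙 F := Cofork.IsColimit.hom_ext hc <| by
    simp only [Cofork.π_ofπ] at hι ⊢
    rw [reassoc_of% hι, hρ]
    exact (Category.comp_id π).symm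
  exact preadditiveCoyoneda.essImage.prop_of_retract ⟨ι, ρ, hιρ⟩
    (preadditiveCoyoneda.obj_mem_essImage _)

end Triangulated

/-- Let `K` be a triangulated category with split idempotents. A homological
functor `F : K ⥤ Ab` is representable (naturally isomorphic to `K(S,-)` for some `S`) if and
only if its exact extension `F* : (mod Kᵒᵖ)ᵒᵖ ⥤ Ab` to the abelianization is representable. -/
theorem statement3 [HasZeroObject K] [HasShift K ℤ]
    [∀ n : ℤ, (shiftFunctor K n).Additive] [Pretriangulated K] [IsIdempotentComplete K]
    (F : K ⥤ AddCommGrpCat.{v}) [F.IsHomological]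
    (Fs : (ModKop K)ᵒᵖ ⥤ AddCommGrpCat.{v})
    [PreservesFiniteLimits Fs] [PreservesFiniteColimits Fs]
    (hFs : yonedaFP K ⋙ Fs ≅ F) :
    (∃ S : K, Nonempty (F ≅ preadditiveCoyoneda.obj (Opposite.op S))) ↔
      (∃ X : (ModKop K)ᵒᵖ, ∃ e : ∀ Y : (ModKop K)ᵒᵖ, (X ⟶ Y) ≃ Fs.obj Y,
        ∀ (Y Z : (ModKop K)ᵒᵖ) (g : Y ⟶ Z) (f : X ⟶ Y),
          e Z (f ≫ g) = Fs.map g (e Y f)) := by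
  constructor
  · rintro ⟨S, ⟨σ⟩⟩
    let c := corepresentableByOfIso F Fs hFs σ
    exact ⟨_, fun _ => c.homEquiv, fun _ _ g f => c.homEquiv_comp g f⟩
  · rintro ⟨X, e, he⟩
    obtain ⟨S, ⟨σ⟩⟩ := preadditiveCoyoneda_essImage_of_isFinitelyPresentable F
      (isFinitelyPresentable_of_corepresentableBy F Fs hFs ⟨e _, he _ _⟩)
    exact ⟨S.unop, ⟨σ.symm⟩⟩

end Statement3
end

section
/- Heller's representability theorem: Let K be a triangulated category with products. A homological functor F : K → Ab that preserves products is representable if and only if it admits a solution object, i.e., there exists S ∈ K and a natural epimorphism K(S,-) → F. -/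
/-!
An epimorphism `η : K(S, -) ⟶ F` makes `σ = η(𝟙 S)` a solution element: every element of `F` is
`F g σ` for some `g`. Homological functors lift elements along weak kernels, and a
product-preserving one detects equality on `∏ S`, so `σ` lifts to a weak equalizer `W` of all
endomorphisms of `S` fixing `σ`. A map back `S ⟶ W` hitting that lift gives an idempotent of `W`;
splitting it (idempotents split when there are countable products) yields `θ ∈ F I`, still a
solution element, fixed by no endomorphism of `I` but the identity. If `F g θ = F g' θ`, a weak
equalizer `v : V ⟶ I` of `g, g'` with `θ` lifted to it and a map `s : I ⟶ V` hitting the lift give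
`s ≫ v = 𝟙`, so `g = g'`: hence `g ↦ F g θ` is bijective and `F ≅ K(I, -)`.
-/

open CategoryTheory CategoryTheory.Limits CategoryTheory.Pretriangulated

universe v u

namespace CategoryTheory

section IdSubShift

variable {K : Type u} [Category.{v} K] [Preadditive K] [HasCountableProducts K] {X : K}
  (e : X ⟶ X)

noncomputable def idSubShift : (∏ᶜ fun _ : ℕ => X) ⟶ ∏ᶜ fun _ : ℕ => X :=
  Pi.lift fun n => Pi.π _ n - Pi.π _ (n + 1) ≫ e

@[simp]
lemma idSubShift_π (n : ℕ) :
    idSubShift e ≫ Pi.π _ n = Pi.π (fun _ : ℕ => X) n - Pi.π _ (n + 1) ≫ e :=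
  Pi.lift_π _ _

variable {e}

lemma isSplitEpi_idSubShift (he : e ≫ e = e) : IsSplitEpi (idSubShift e) := by
  let k : (∏ᶜ fun _ : ℕ => X) ⟶ ∏ᶜ fun _ : ℕ => X := Pi.lift fun n =>
    Pi.π _ n ≫ (𝟙 X - e) - (∑ j ∈ Finset.range n, Pi.π _ j) ≫ e
  have hk (n : ℕ) :
      k ≫ Pi.π _ n = Pi.π _ n ≫ (𝟙 X - e) - (∑ j ∈ Finset.range n, Pi.π _ j) ≫ e :=
    Pi.lift_π _ _
  refine ⟨⟨k, Pi.hom_ext _ _ fun n => ?_⟩⟩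
  rw [Category.assoc, idSubShift_π, Preadditive.comp_sub, hk, ← Category.assoc, hk,
    Finset.sum_range_succ]
  simp only [Preadditive.sub_comp, Preadditive.add_comp, Preadditive.comp_sub, Category.assoc, he,
    Category.id_comp, Category.comp_id, sub_self]
  abel

lemma comp_π_eq_of_comp_idSubShift_eq_zero {V : K} {v : V ⟶ ∏ᶜ fun _ : ℕ => X}
    (hv : v ≫ idSubShift e = 0) (he : e ≫ e = e) (n : ℕ) :
    v ≫ Pi.π _ n = v ≫ Pi.π _ 0 ∧ v ≫ Pi.π _ n ≫ e = v ≫ Pi.π _ n := by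
  have hstep (m : ℕ) : v ≫ Pi.π _ m = v ≫ Pi.π _ (m + 1) ≫ e := by
    simpa [Preadditive.comp_sub, sub_eq_zero] using congrArg (· ≫ Pi.π _ m) hv
  have hfix (m : ℕ) : v ≫ Pi.π _ m ≫ e = v ≫ Pi.π _ m := by
    rw [reassoc_of% (hstep m), he, ← hstep]
  refine ⟨?_, hfix n⟩
  induction n with
  | zero => rfl
  | succ m ih => rw [← ih, hstep m, hfix]

end IdSubShift

section SolutionElement

variable {K : Type u} [Category.{v} K]

def Functor.IsSolutionElement (F : K ⥤ AddCommGrpCat.{v}) {S : K} (σ : F.obj S) : Prop :=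
  ∀ ⦃X : K⦄ (x : F.obj X), ∃ g : S ⟶ X, F.map g σ = x

variable {F : K ⥤ AddCommGrpCat.{v}}

lemma Functor.IsSolutionElement.of_map {S I : K} {σ : F.obj S} (hσ : F.IsSolutionElement σ)
    {θ : F.obj I} (r : I ⟶ S) (hr : F.map r θ = σ) : F.IsSolutionElement θ := fun X x => by
  obtain ⟨g, rfl⟩ := hσ x
  exact ⟨r ≫ g, by simp [hr]⟩

lemma isSolutionElement_app_id_of_epi [Preadditive K] {S : K}
    (η : preadditiveCoyoneda.obj (Opposite.op S) ⟶ F) [Epi η] :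
    F.IsSolutionElement (η.app S (𝟙 S)) := fun X x => by
  obtain ⟨g : S ⟶ X, rfl⟩ :=
    (AddCommGrpCat.epi_iff_surjective _).1 ((NatTrans.epi_iff_epi_app η).1 ‹_› X) x
  exact ⟨g, (ConcreteCategory.congr_hom (η.naturality g) (𝟙 S)).symm.trans
    (congrArg (η.app X) (Category.id_comp g))⟩

lemma exists_rigid_solutionElement [IsIdempotentComplete K] {S W : K} {σ : F.obj S}
    (hσ : F.IsSolutionElement σ) (w : W ⟶ S) {ξ : F.obj W} (hξ : F.map w ξ = σ)
    (hw : ∀ e : S ⟶ S, F.map e σ = σ → w ≫ e = w) :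
    ∃ (I : K) (θ : F.obj I), F.IsSolutionElement θ ∧ ∀ φ : I ⟶ I, F.map φ θ = θ → φ = 𝟙 I := by
  obtain ⟨t, ht⟩ := hσ ξ
  have hwtw : w ≫ t ≫ w = w := hw _ (by simp [ht, hξ])
  obtain ⟨I, i, ρ, hiρ, hρi⟩ :=
    IsIdempotentComplete.idempotents_split W (w ≫ t) (by simp [reassoc_of% hwtw])
  let r := i ≫ w
  let j := t ≫ ρ
  have hrj : r ≫ j = 𝟙 I := by
    simp only [r, j, Category.assoc]
    rw [← reassoc_of% hρi, reassoc_of% hiρ, hiρ]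
  have hjr : F.map (j ≫ r) σ = σ := by simp [j, r, reassoc_of% hρi, ht, hξ]
  have hr (e : S ⟶ S) (he : F.map e σ = σ) : r ≫ e = r := by simp [r, hw e he]
  refine ⟨I, F.map j σ, hσ.of_map r (by simpa using hjr), fun φ hφ => ?_⟩
  have hφr : φ ≫ r = r := by
    simpa [reassoc_of% hrj] using hr (j ≫ φ ≫ r) (by simpa [hφ] using hjr)
  simpa [hrj] using hφr =≫ j

end SolutionElement

lemma Functor.eq_of_map_π_eq {K : Type u} [Category.{v} K] (F : K ⥤ AddCommGrpCat.{v})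
    {J : Type*} (f : J → K) [HasProduct f] [PreservesLimit (Discrete.functor f) F]
    {x y : F.obj (∏ᶜ f)} (h : ∀ j, F.map (Pi.π f j) x = F.map (Pi.π f j) y) : x = y :=
  Concrete.isLimit_ext _ (isLimitOfPreserves F (limit.isLimit _)) x y fun ⟨j⟩ => h j

lemma nonempty_iso_preadditiveCoyoneda_of_bijective {K : Type u} [Category.{v} K] [Preadditive K]
    {F : K ⥤ AddCommGrpCat.{v}} [F.Additive] {I : K} (θ : F.obj I)
    (h : ∀ X : K, Function.Bijective fun g : I ⟶ X => F.map g θ) :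
    Nonempty (F ≅ preadditiveCoyoneda.obj (Opposite.op I)) := by
  let evalAt (X : K) : (I ⟶ X) →+ F.obj X :=
    { toFun g := F.map g θ
      map_zero' := by simp
      map_add' g g' := by simp [F.map_add] }
  refine ⟨(NatIso.ofComponents (fun X => (AddEquiv.ofBijective (evalAt X) (h X)).toAddCommGrpIso)
    fun {X Y} g => ?_).symm⟩
  ext (g' : I ⟶ X)
  change F.map (g' ≫ g) θ = F.map g (F.map g' θ)
  simp

section Triangulated

variable {K : Type u} [Category.{v} K] [Preadditive K] [HasZeroObject K]
  [HasShift K ℤ] [∀ n : ℤ, (shiftFunctor K n).Additive] [Pretriangulated K]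

/-- Bökstedt–Neeman: the image of `e` is the homotopy limit of `X ← X ← ⋯` (all maps `e`), a weak
kernel of `idSubShift e`; that weak kernel is monic because `idSubShift e` is a split epimorphism. -/
theorem Pretriangulated.isIdempotentComplete_of_hasCountableProducts [HasCountableProducts K] :
    IsIdempotentComplete K := by
  refine ⟨fun X e he => ?_⟩
  obtain ⟨V, v, h, hT⟩ := distinguished_cocone_triangle₁ (idSubShift e)
  have hv : v ≫ idSubShift e = 0 := comp_distTriang_mor_zero₁₂ _ hT
  have : Mono v := Triangle.mono₁ _ hT <|
    Triangle.mor₃_eq_zero_of_epi₂ _ hT (isSplitEpi_idSubShift he).epi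
  let c : X ⟶ ∏ᶜ fun _ : ℕ => X := Pi.lift fun _ => e
  have hc : c ≫ idSubShift e = 0 := Pi.hom_ext _ _ fun n => by simp [c, he]
  obtain ⟨i, hi⟩ : ∃ i : X ⟶ V, c = i ≫ v := Triangle.coyoneda_exact₂ _ hT c hc
  have hie : i ≫ v ≫ Pi.π _ 0 = e := by simp [← Category.assoc, ← hi, c]
  refine ⟨V, v ≫ Pi.π _ 0, i, ?_, hie⟩
  refine (cancel_mono v).1 (Pi.hom_ext _ _ fun n => ?_)
  obtain ⟨hn, -⟩ := comp_π_eq_of_comp_idSubShift_eq_zero hv he n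
  simp only [Category.assoc, Category.id_comp, hn, hie]
  exact (comp_π_eq_of_comp_idSubShift_eq_zero hv he 0).2

variable {F : K ⥤ AddCommGrpCat.{v}} [F.IsHomological]

lemma Pretriangulated.exists_comp_eq_comp_and_map_eq {A B : K} (f g : A ⟶ B) {x : F.obj A}
    (hx : F.map f x = F.map g x) :
    ∃ (W : K) (w : W ⟶ A) (ξ : F.obj W), w ≫ f = w ≫ g ∧ F.map w ξ = x := by
  obtain ⟨W, w, h, hT⟩ := distinguished_cocone_triangle₁ (f - g)
  have hexact := (ShortComplex.ab_exact_iff _).1 (F.map_distinguished_exact _ hT)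
  obtain ⟨ξ, hξ⟩ := hexact x (show F.map (f - g) x = 0 by simp [hx])
  have hw : w ≫ (f - g) = 0 := comp_distTriang_mor_zero₁₂ _ hT
  exact ⟨W, w, ξ, sub_eq_zero.1 (by simpa [Preadditive.comp_sub] using hw), hξ⟩

lemma Pretriangulated.exists_equalizer_stabilizer [HasProducts.{v} K]
    [∀ J : Type v, PreservesLimitsOfShape (Discrete J) F] {S : K} (σ : F.obj S) :
    ∃ (W : K) (w : W ⟶ S) (ξ : F.obj W),
      F.map w ξ = σ ∧ ∀ e : S ⟶ S, F.map e σ = σ → w ≫ e = w := by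
  let stab := {e : S ⟶ S // F.map e σ = σ}
  let a : S ⟶ ∏ᶜ fun _ : stab => S := Pi.lift Subtype.val
  let b : S ⟶ ∏ᶜ fun _ : stab => S := Pi.lift fun _ => 𝟙 S
  have hab : F.map a σ = F.map b σ := F.eq_of_map_π_eq _ fun e => by
    rw [← ConcreteCategory.comp_apply, ← ConcreteCategory.comp_apply, ← F.map_comp,
      ← F.map_comp]
    simp [a, b, e.2]
  obtain ⟨W, w, ξ, hw, hξ⟩ := exists_comp_eq_comp_and_map_eq a b hab
  refine ⟨W, w, ξ, hξ, fun e he => ?_⟩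
  simpa [a, b] using hw =≫ Pi.π _ (⟨e, he⟩ : stab)

lemma Functor.IsSolutionElement.injective_of_rigid {I : K} {θ : F.obj I}
    (hθ : F.IsSolutionElement θ) (hrigid : ∀ φ : I ⟶ I, F.map φ θ = θ → φ = 𝟙 I) (X : K) :
    Function.Injective fun g : I ⟶ X => F.map g θ := fun g g' hg => by
  obtain ⟨V, v, ζ, hv, hζ⟩ := exists_comp_eq_comp_and_map_eq g g' hg
  obtain ⟨s, hs⟩ := hθ ζ
  have hsv : s ≫ v = 𝟙 I := hrigid _ (by simp [hs, hζ])
  simpa [reassoc_of% hsv] using s ≫= hv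

end Triangulated

end CategoryTheory

/-- **Heller's representability theorem.** Let `K` be a triangulated category
with products. A homological product-preserving functor `F : K ⥤ Ab` is representable
(naturally isomorphic to `K(S,-)` for some `S : K`) if and only if it admits a solution
object, i.e. there are `S : K` and a natural epimorphism `K(S,-) ⟶ F`. -/
theorem statement5 (K : Type u) [Category.{v} K] [Preadditive K] [HasZeroObject K]
    [HasShift K ℤ] [∀ n : ℤ, (shiftFunctor K n).Additive] [Pretriangulated K]
    [HasProducts.{v} K]
    (F : K ⥤ AddCommGrpCat.{v}) [F.IsHomological]
    [∀ J : Type v, PreservesLimitsOfShape (Discrete J) F] :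
    (∃ S : K, Nonempty (F ≅ preadditiveCoyoneda.obj (Opposite.op S))) ↔
      (∃ (S : K) (η : preadditiveCoyoneda.obj (Opposite.op S) ⟶ F), Epi η) := by
  refine ⟨fun ⟨S, ⟨e⟩⟩ => ⟨S, e.inv, inferInstance⟩, fun ⟨S, η, _⟩ => ?_⟩
  have := isIdempotentComplete_of_hasCountableProducts (K := K)
  obtain ⟨W, w, ξ, hξ, hw⟩ := exists_equalizer_stabilizer (η.app S (𝟙 S))
  obtain ⟨I, θ, hθ, hrigid⟩ :=
    exists_rigid_solutionElement (isSolutionElement_app_id_of_epi η) w hξ hw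
  exact ⟨I, nonempty_iso_preadditiveCoyoneda_of_bijective θ
    fun X => ⟨hθ.injective_of_rigid hrigid X, fun x => hθ x⟩⟩
end

section
/- Let T be a triangulated category with products and K ⊆ T a colocalizing subcategory (a triangulated subcategory closed under products). The inclusion functor I : K → T has a left adjoint if and only if every object of T admits a K-preenvelope. -/
/-!
A left adjoint of the inclusion sends `X` to a reflection `X → L X`, and a reflection is in
particular a preenvelope. Conversely, let `f : X → Y` be a `K`-preenvelope. Taking the fibre
`V → Y` of the product of all endomorphisms `g` of `Y` with `f ≫ g = 0`, and a lift `Y → V` of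
`X → V`, gives an endomorphism `c` of `Y` with `f ≫ c = f` which kills every map
`k : Y → Z`, `Z ∈ K`, with `f ≫ k = 0` (such a `k` equals `g ≫ k` for one of those `g`, by
the preenvelope property applied to the fibre of `k`). So `c` is idempotent, and idempotents of
`K` split in `K`: the splitting object is the homotopy limit of the tower `⋯ → Y → Y` with all
maps `c`, i.e. the fibre of `1 - shift` on `∏ₙ Y`, which is a split epimorphism. If
`Y → L → Y` splits `c`, then `X → Y → L` is a reflection of `X` into `K`.
-/

open CategoryTheory CategoryTheory.Limits CategoryTheory.Pretriangulated

universe v u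

namespace CategoryTheory.Triangulated

/-- The structure `Triangulated.Subcategory` of Mathlib (December 2024), removed since:
a triangulated subcategory of a pretriangulated category `C`. -/
structure Subcategory (C : Type*) [Category C] [HasZeroObject C] [HasShift C ℤ]
    [Preadditive C] [∀ n : ℤ, (shiftFunctor C n).Additive] [Pretriangulated C] where
  /-- the underlying predicate on objects of a triangulated subcategory -/
  P : C → Prop
  zero' : ∃ (Z : C) (_ : IsZero Z), P Z
  shift (X : C) (n : ℤ) : P X → P (X⟦n⟧)
  ext₂' (T : Triangle C) (_ : T ∈ distTriang C) : P T.obj₁ → P T.obj₃ →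
    ObjectProperty.isoClosure P T.obj₂

end CategoryTheory.Triangulated

namespace CategoryTheory

namespace ObjectProperty

variable {C : Type u} [Category.{v} C] {P : ObjectProperty C}

variable (P) in
def IsPreenvelope {X Y : C} (f : X ⟶ Y) : Prop :=
  P Y ∧ ∀ Z, P Z → ∀ g : X ⟶ Z, ∃ h : Y ⟶ Z, f ≫ h = g

lemma exists_isPreenvelope_of_leftAdjointObjIsDefined {X : C}
    (hX : P.ι.leftAdjointObjIsDefined X) : ∃ (Y : C) (f : X ⟶ Y), P.IsPreenvelope f := by
  let F := P.ι ⋙ coyoneda.obj (Opposite.op X)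
  have : F.IsCorepresentable := hX
  let e := F.corepresentableBy
  refine ⟨F.coreprX.obj, e.homEquiv (𝟙 _), F.coreprX.property, fun Z hZ g => ?_⟩
  let h : F.coreprX ⟶ ⟨Z, hZ⟩ := e.homEquiv.symm g
  refine ⟨h.hom, ?_⟩
  have hcomp := e.homEquiv_comp h (𝟙 _)
  rw [Category.id_comp, Equiv.apply_symm_apply] at hcomp
  exact hcomp.symm

lemma leftAdjointObjIsDefined_of_existsUnique {X L : C}
    (hL : P L) (l : X ⟶ L) (hl : ∀ Z, P Z → ∀ z : X ⟶ Z, ∃! h : L ⟶ Z, l ≫ h = z) :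
    P.ι.leftAdjointObjIsDefined X :=
  Functor.CorepresentableBy.isCorepresentable (X := ⟨L, hL⟩)
    { homEquiv := fun {Z} => Equiv.ofBijective (fun h => l ≫ h.hom)
        ⟨fun _ _ h => hom_ext _ ((hl Z.obj Z.property _).unique h rfl),
          fun z => ⟨homMk (hl Z.obj Z.property z).exists.choose,
            (hl Z.obj Z.property z).exists.choose_spec⟩⟩
      homEquiv_comp := fun _ _ => (Category.assoc _ _ _).symm }

lemma IsPreenvelope.existsUnique_of_retract [Preadditive C] {X Y L : C} {f : X ⟶ Y}
    (hf : P.IsPreenvelope f) {c : Y ⟶ Y} (hfc : f ≫ c = f)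
    (hc : ∀ Z, P Z → ∀ k : Y ⟶ Z, f ≫ k = 0 → c ≫ k = 0) {π : Y ⟶ L} {ρ : L ⟶ Y}
    (hπρ : π ≫ ρ = c) (hρπ : ρ ≫ π = 𝟙 L) (Z : C) (hZ : P Z) (z : X ⟶ Z) :
    ∃! h : L ⟶ Z, (f ≫ π) ≫ h = z := by
  obtain ⟨g, hg⟩ := hf.2 Z hZ z
  have hρc : ρ ≫ c = ρ := by rw [← hπρ, reassoc_of% hρπ]
  have cancel : ∀ h : L ⟶ Z, (f ≫ π) ≫ h = 0 → h = 0 := fun h hh => by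
    have hkill : c ≫ π ≫ h = 0 := hc Z hZ _ (by simpa using hh)
    rw [← Category.id_comp h, ← hρπ, Category.assoc, ← hρc, Category.assoc, hkill, comp_zero]
  refine ⟨ρ ≫ g, by simp [reassoc_of% hπρ, reassoc_of% hfc, hg], fun h hh => ?_⟩
  rw [← sub_eq_zero]
  exact cancel _ (by simp [Preadditive.comp_sub, hh, reassoc_of% hπρ, reassoc_of% hfc, hg])

end ObjectProperty

section HomotopyLimit

variable {C : Type u} [Category.{v} C] [Preadditive C] {Y : C}
  [HasProduct fun _ : ULift.{v} ℕ => Y]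

/-- `1 - shift` on `∏ₙ Y` for the tower `⋯ → Y → Y` all of whose maps are `c`; its fibre is
the homotopy limit of the tower. -/
noncomputable def homotopyLimitDiff (c : Y ⟶ Y) :
    (∏ᶜ fun _ : ULift.{v} ℕ => Y) ⟶ ∏ᶜ fun _ : ULift.{v} ℕ => Y :=
  Pi.lift fun n => Pi.π _ n - Pi.π _ (ULift.up (n.down + 1)) ≫ c

@[simp]
lemma homotopyLimitDiff_π (c : Y ⟶ Y) (n : ULift.{v} ℕ) :
    homotopyLimitDiff c ≫ Pi.π _ n = Pi.π _ n - Pi.π _ (ULift.up (n.down + 1)) ≫ c :=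
  Pi.lift_π _ _

variable {c : Y ⟶ Y}

/-- On the image of `1 - c` the map `homotopyLimitDiff c` is the identity; on the image of `c`
it is `1 - shift`, which the partial sums invert from the right. -/
lemma homotopyLimitDiff_section (hc : c ≫ c = c) :
    Pi.lift (fun n : ULift.{v} ℕ => Pi.π _ n ≫ (𝟙 Y - c) -
      (∑ k ∈ Finset.range n.down, Pi.π _ (ULift.up k)) ≫ c) ≫ homotopyLimitDiff c = 𝟙 _ := by
  ext ⟨n⟩
  simp only [Category.assoc, homotopyLimitDiff_π, Preadditive.comp_sub, Pi.lift_π_assoc,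
    Pi.lift_π, Category.id_comp, Finset.sum_range_succ, Preadditive.sub_comp,
    Preadditive.add_comp, hc, Category.comp_id]
  abel

lemma isSplitEpi_homotopyLimitDiff (hc : c ≫ c = c) : IsSplitEpi (homotopyLimitDiff c) :=
  IsSplitEpi.mk' ⟨_, homotopyLimitDiff_section hc⟩

lemma lift_comp_homotopyLimitDiff (hc : c ≫ c = c) :
    Pi.lift (fun _ => c) ≫ homotopyLimitDiff c = 0 := by
  ext n
  simp [hc]

lemma eq_comp_lift_of_comp_homotopyLimitDiff_eq_zero (hc : c ≫ c = c) {Q : C}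
    {x : Q ⟶ ∏ᶜ fun _ : ULift.{v} ℕ => Y} (hx : x ≫ homotopyLimitDiff c = 0) :
    x = (x ≫ Pi.π _ (ULift.up 0)) ≫ Pi.lift fun _ => c := by
  have hstep (n : ℕ) : x ≫ Pi.π _ (ULift.up n) = x ≫ Pi.π _ (ULift.up (n + 1)) ≫ c := by
    simpa [sub_eq_zero] using congr($hx ≫ Pi.π _ (ULift.up n))
  have hfix (n : ℕ) : x ≫ Pi.π _ (ULift.up n) ≫ c = x ≫ Pi.π _ (ULift.up n) := by
    rw [← Category.assoc, hstep n]
    simp [hc]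
  have hconst (n : ℕ) : x ≫ Pi.π _ (ULift.up n) = x ≫ Pi.π _ (ULift.up 0) := by
    induction n with
    | zero => rfl
    | succ n ih => rw [← ih, hstep n, hfix]
  ext ⟨n⟩
  simp [hconst n, hfix]

variable [HasZeroObject C] [HasShift C ℤ] [∀ n : ℤ, (shiftFunctor C n).Additive]
  [Pretriangulated C]

lemma exists_splitting_of_homotopyLimit (hc : c ≫ c = c) {L : C}
    {r : L ⟶ ∏ᶜ fun _ : ULift.{v} ℕ => Y} {m : (∏ᶜ fun _ : ULift.{v} ℕ => Y) ⟶ L⟦(1 : ℤ)⟧}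
    (hT : Triangle.mk r (homotopyLimitDiff c) m ∈ distTriang C) :
    ∃ (π : Y ⟶ L) (ρ : L ⟶ Y), π ≫ ρ = c ∧ ρ ≫ π = 𝟙 L := by
  have := isSplitEpi_homotopyLimitDiff hc
  have hd : Epi (homotopyLimitDiff c) := inferInstance
  have : Mono r := Triangle.mono₁ _ hT (Triangle.mor₃_eq_zero_of_epi₂ _ hT hd)
  obtain ⟨π, hπ⟩ : ∃ π : Y ⟶ L, Pi.lift (fun _ => c) = π ≫ r :=
    Triangle.coyoneda_exact₂ _ hT _ (lift_comp_homotopyLimitDiff hc)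
  have hr : r = (r ≫ Pi.π _ (ULift.up 0)) ≫ Pi.lift fun _ => c :=
    eq_comp_lift_of_comp_homotopyLimitDiff_eq_zero hc (comp_distTriang_mor_zero₁₂ _ hT)
  refine ⟨π, r ≫ Pi.π _ (ULift.up 0), by simp [← reassoc_of% hπ], ?_⟩
  rw [← cancel_mono r, Category.assoc, ← hπ, ← hr, Category.id_comp]

end HomotopyLimit

namespace Triangulated.Subcategory

variable {C : Type u} [Category.{v} C] [Preadditive C] [HasZeroObject C] [HasShift C ℤ]
  [∀ n : ℤ, (shiftFunctor C n).Additive] [Pretriangulated C]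
  (S : Subcategory C) [ObjectProperty.IsClosedUnderIsomorphisms S.P]

lemma ext₁ (T : Triangle C) (hT : T ∈ distTriang C) (h₂ : S.P T.obj₂) (h₃ : S.P T.obj₃) :
    S.P T.obj₁ := by
  have h := S.ext₂' _ (inv_rot_of_distTriang _ hT) (S.shift _ _ h₃) h₂
  rwa [ObjectProperty.isoClosure_eq_self] at h

lemma exists_splitting_of_idempotent {Y : C} [HasProduct fun _ : ULift.{v} ℕ => Y]
    (hY : S.P (∏ᶜ fun _ : ULift.{v} ℕ => Y)) {c : Y ⟶ Y} (hc : c ≫ c = c) :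
    ∃ (L : C) (_ : S.P L) (π : Y ⟶ L) (ρ : L ⟶ Y), π ≫ ρ = c ∧ ρ ≫ π = 𝟙 L := by
  obtain ⟨L, r, m, hT⟩ := distinguished_cocone_triangle₁ (homotopyLimitDiff c)
  exact ⟨L, S.ext₁ _ hT hY hY, exists_splitting_of_homotopyLimit hc hT⟩

variable {S}

lemma exists_factor_of_comp_eq_zero {X Y : C} (f : X ⟶ Y) (hY : S.P Y) {ι : Type*}
    {Z : ι → C} [HasProduct Z] (hZ : S.P (∏ᶜ Z)) (g : ∀ i, Y ⟶ Z i) (hfg : ∀ i, f ≫ g i = 0) :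
    ∃ (V : C) (_ : S.P V) (p : V ⟶ Y) (v : X ⟶ V), v ≫ p = f ∧ ∀ i, p ≫ g i = 0 := by
  obtain ⟨V, p, m, hT⟩ := distinguished_cocone_triangle₁ (Pi.lift g)
  have hf : f ≫ Pi.lift g = 0 := Pi.hom_ext _ _ fun i => by simp [hfg]
  obtain ⟨v, hv⟩ : ∃ v : X ⟶ V, f = v ≫ p := Triangle.coyoneda_exact₂ _ hT f hf
  refine ⟨V, S.ext₁ _ hT hY hZ, p, v, hv.symm, fun i => ?_⟩
  have hpg : p ≫ Pi.lift g = 0 := comp_distTriang_mor_zero₁₂ _ hT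
  simpa using congr($hpg ≫ Pi.π Z i)

lemma exists_comp_eq_self_of_isPreenvelope {X Y Z : C} {f : X ⟶ Y}
    (hf : ObjectProperty.IsPreenvelope S.P f) (hZ : S.P Z) {k : Y ⟶ Z} (hk : f ≫ k = 0) :
    ∃ g : Y ⟶ Y, f ≫ g = 0 ∧ g ≫ k = k := by
  obtain ⟨W, e, m, hT⟩ := distinguished_cocone_triangle₁ k
  obtain ⟨w, hw⟩ : ∃ w : X ⟶ W, f = w ≫ e := Triangle.coyoneda_exact₂ _ hT f hk
  obtain ⟨t, ht⟩ := hf.2 W (S.ext₁ _ hT hf.1 hZ) w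
  have hek : e ≫ k = 0 := comp_distTriang_mor_zero₁₂ _ hT
  refine ⟨𝟙 Y - t ≫ e, ?_, ?_⟩
  · rw [Preadditive.comp_sub, reassoc_of% ht, ← hw, Category.comp_id, sub_self]
  · rw [Preadditive.sub_comp, Category.assoc, hek, comp_zero, sub_zero, Category.id_comp]

lemma exists_idempotent_of_isPreenvelope [HasProducts.{v} C]
    (hprod : ∀ {J : Type v} (F : J → C), (∀ j, S.P (F j)) → S.P (∏ᶜ F)) {X Y : C} {f : X ⟶ Y}
    (hf : ObjectProperty.IsPreenvelope S.P f) :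
    ∃ c : Y ⟶ Y, c ≫ c = c ∧ f ≫ c = f ∧
      ∀ Z, S.P Z → ∀ k : Y ⟶ Z, f ≫ k = 0 → c ≫ k = 0 := by
  obtain ⟨V, hV, p, v, hvp, hp⟩ := exists_factor_of_comp_eq_zero f hf.1
    (hprod (fun _ : {g : Y ⟶ Y // f ≫ g = 0} => Y) fun _ => hf.1) (fun g => g.1) (fun g => g.2)
  obtain ⟨s, hs⟩ := hf.2 V hV v
  have hfc : f ≫ s ≫ p = f := by rw [reassoc_of% hs, hvp]
  have hc (Z : C) (hZ : S.P Z) (k : Y ⟶ Z) (hk : f ≫ k = 0) : (s ≫ p) ≫ k = 0 := by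
    obtain ⟨g, hfg, hgk⟩ := exists_comp_eq_self_of_isPreenvelope hf hZ hk
    rw [← hgk, Category.assoc, reassoc_of% (hp ⟨g, hfg⟩), zero_comp, comp_zero]
  have hcc := hc Y hf.1 (s ≫ p - 𝟙 Y) (by simp [Preadditive.comp_sub, hfc])
  rw [Preadditive.comp_sub, Category.comp_id, sub_eq_zero] at hcc
  exact ⟨s ≫ p, hcc, hfc, hc⟩

lemma leftAdjointObjIsDefined_of_isPreenvelope [HasProducts.{v} C]
    (hprod : ∀ {J : Type v} (F : J → C), (∀ j, S.P (F j)) → S.P (∏ᶜ F)) {X Y : C}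
    {f : X ⟶ Y} (hf : ObjectProperty.IsPreenvelope S.P f) :
    (ObjectProperty.ι S.P).leftAdjointObjIsDefined X := by
  obtain ⟨c, hcc, hfc, hc⟩ := exists_idempotent_of_isPreenvelope hprod hf
  obtain ⟨L, hL, π, ρ, hπρ, hρπ⟩ :=
    S.exists_splitting_of_idempotent (hprod _ fun _ => hf.1) hcc
  exact ObjectProperty.leftAdjointObjIsDefined_of_existsUnique hL (f ≫ π)
    (hf.existsUnique_of_retract hfc hc hπρ hρπ)

end Triangulated.Subcategory

end CategoryTheory

/-- Let `T` be a triangulated category with products and `K ⊆ T` a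
colocalizing subcategory (a triangulated subcategory closed under products). The inclusion
functor `I : K ⥤ T` has a left adjoint (i.e. `I` is a right adjoint) if and only if every
object of `T` admits a `K`-preenvelope. -/
theorem statement7 (T : Type u) [Category.{v} T] [Preadditive T] [HasZeroObject T]
    [HasShift T ℤ] [∀ n : ℤ, (shiftFunctor T n).Additive] [Pretriangulated T]
    [IsTriangulated T] [HasProducts.{v} T]
    (S : Triangulated.Subcategory T) [ObjectProperty.IsClosedUnderIsomorphisms S.P]
    (hprod : ∀ {J : Type v} (f : J → T), (∀ j, S.P (f j)) → S.P (∏ᶜ f)) :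
    (ObjectProperty.ι S.P).IsRightAdjoint ↔
      (∀ X : T, ∃ (Y : T) (_ : S.P Y) (f : X ⟶ Y),
        ∀ (Z : T), S.P Z → ∀ g : X ⟶ Z, ∃ h : Y ⟶ Z, f ≫ h = g) := by
  rw [Functor.isRightAdjoint_iff_leftAdjointObjIsDefined_eq_top]
  simp only [funext_iff, Pi.top_apply, Prop.top_eq_true, eq_iff_iff, iff_true]
  refine forall_congr' fun X => ⟨fun h => ?_, fun ⟨Y, hY, f, hf⟩ => ?_⟩
  · obtain ⟨Y, f, hY, hf⟩ := ObjectProperty.exists_isPreenvelope_of_leftAdjointObjIsDefined h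
    exact ⟨Y, hY, f, hf⟩
  · exact Triangulated.Subcategory.leftAdjointObjIsDefined_of_isPreenvelope hprod ⟨hY, hf⟩
end

section
/- Let A be an additive category and let 0 → X' → X → X'' → 0 be a short exact sequence of cochain complexes over A that splits in each degree. Then there is a distinguished triangle X' → X → X'' → X'[1] in the homotopy category K(A). -/
open CategoryTheory CategoryTheory.Limits CategoryTheory.Pretriangulated

universe v u

/-- Let `A` be an additive category and `0 ⟶ X' ⟶ X ⟶ X'' ⟶ 0` a short
exact sequence of cochain complexes over `A` that splits in each degree. Then there is a
distinguished triangle `X' ⟶ X ⟶ X'' ⟶ X'⟦1⟧` in the homotopy category `K(A)`. -/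
theorem statement11 (A : Type u) [Category.{v} A] [Preadditive A] [HasZeroObject A]
    [HasBinaryBiproducts A]
    (S : ShortComplex (CochainComplex A ℤ))
    (σ : ∀ n : ℤ, (S.map (HomologicalComplex.eval A (ComplexShape.up ℤ) n)).Splitting) :
    ∃ δ : (HomotopyCategory.quotient A (ComplexShape.up ℤ)).obj S.X₃ ⟶
        ((HomotopyCategory.quotient A (ComplexShape.up ℤ)).obj S.X₁)⟦(1 : ℤ)⟧,
      Triangle.mk ((HomotopyCategory.quotient A (ComplexShape.up ℤ)).map S.f)
          ((HomotopyCategory.quotient A (ComplexShape.up ℤ)).map S.g) δ ∈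
        distTriang (HomotopyCategory A (ComplexShape.up ℤ)) := by
  refine ⟨(HomotopyCategory.quotient A (ComplexShape.up ℤ)).map
      (CochainComplex.homOfDegreewiseSplit S σ) ≫
      (((HomotopyCategory.quotient A (ComplexShape.up ℤ)).commShiftIso (1 : ℤ)).hom.app S.X₁), ?_⟩
  rw [HomotopyCategory.distinguished_iff_iso_trianglehOfDegreewiseSplit]
  exact ⟨S, σ, ⟨Iso.refl _⟩⟩
end

section
/- Let A be an additive category with products and split idempotents, possessing a product generator G (every object of A is a direct factor of a product of copies of G). Let S = {G[n] : n ∈ ℤ} in K(A). Then every bounded complex over A with at most n+1 nonzero entries lies in Prdₙ(S). -/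
/-!
Peel off the top nonzero degree `m` of `X`. The differential leaving degree `m` vanishes, so
`X_m[-m] ⟶ X ⟶ X'`, where `X'` is `X` with its degree-`m` object replaced by `0`, is a degreewise
split short exact sequence of complexes and hence a distinguished triangle in `K(A)`.
Since `X_m` is a retract of some `∏ G` and the quotient functor to `K(A)` preserves products,
`X_m[-m]` is a retract of `∏ G[-m]`, so it lies in `Prd₀(S)`, while `X'` has one nonzero entry
fewer. When `X'` vanishes, the triangle makes `X ≅ X_m[-m]`.
-/

open CategoryTheory CategoryTheory.Limits CategoryTheory.Pretriangulated

universe v u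

namespace Statement12

section Defs

variable (K : Type u) [Category.{v} K] [Preadditive K] [HasZeroObject K]
  [HasShift K ℤ] [∀ n : ℤ, (shiftFunctor K n).Additive] [Pretriangulated K]

/-- `Prod S`: the class of direct factors of products of objects of `S`. -/
def prodClosure (S : Set K) : Set K :=
  {X | ∃ (J : Type v) (f : J → K) (_ : ∀ j, f j ∈ S) (P : K) (π : ∀ j, P ⟶ f j)
      (_ : Nonempty (IsLimit (Fan.mk P π))) (s : X ⟶ P) (r : P ⟶ X), s ≫ r = 𝟙 X}

/-- `Prd₀(S) = Prod S`, and `Prdₙ₊₁(S)` consists of the objects `Y` fitting in a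
distinguished triangle `X ⟶ Y ⟶ Z ⟶ X⟦1⟧` with `X ∈ Prd₀(S)` and `Z ∈ Prdₙ(S)`. -/
def Prd (S : Set K) : ℕ → Set K
  | 0 => prodClosure K S
  | (n + 1) => {Y | ∃ (X Z : K) (f : X ⟶ Y) (g : Y ⟶ Z) (h : Z ⟶ X⟦(1 : ℤ)⟧),
      (Triangle.mk f g h ∈ distTriang K) ∧ X ∈ prodClosure K S ∧ Z ∈ Prd S n}

end Defs

end Statement12

section QuotientPreservesProducts

variable {C : Type*} [Category C] [Preadditive C] {ι : Type*} {c : ComplexShape ι}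
  {J : Type*} {F : J → HomologicalComplex C c} {P : HomologicalComplex C c} {π : ∀ j, P ⟶ F j}

open HomologicalComplex HomotopyCategory

noncomputable def Homotopy.ofIsLimitFan (hπ : ∀ i, IsLimit (Fan.mk (P.X i) fun j => (π j).f i))
    {Y : HomologicalComplex C c} {f g : Y ⟶ P} (H : ∀ j, Homotopy (f ≫ π j) (g ≫ π j)) :
    Homotopy f g where
  hom i i' := Fan.IsLimit.lift (hπ i') fun j => (H j).hom i i'
  zero i i' h := Fan.IsLimit.hom_ext (hπ i') _ _ fun j => by
    rw [zero_comp]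
    exact (Fan.IsLimit.fac (hπ i') _ j).trans ((H j).zero i i' h)
  comm i := Fan.IsLimit.hom_ext (hπ i) _ _ fun j => by
    have fac (i i' : ι) : (Fan.IsLimit.lift (hπ i') fun j => (H j).hom i i') ≫ (π j).f i' =
        (H j).hom i i' := Fan.IsLimit.fac (hπ i') _ j
    rw [fan_mk_proj, Preadditive.add_comp, Preadditive.add_comp, ← dNext_comp_right,
      ← prevD_comp_right]
    simp only [fac]
    exact (H j).comm i

noncomputable def HomotopyCategory.isLimitFanMkQuotientMap
    (hπ : ∀ i, IsLimit (Fan.mk (P.X i) fun j => (π j).f i)) :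
    IsLimit (Fan.mk ((quotient C c).obj P) fun j => (quotient C c).map (π j)) :=
  have hP : IsLimit (Fan.mk P π) := isLimitOfEval _ _ fun i =>
    (isLimitMapConeFanMkEquiv (eval C c i) F π).symm (hπ i)
  let lift (s : Fan fun j => (quotient C c).obj (F j)) (j : J) : s.pt.as ⟶ F j :=
    ((quotient C c).map_surjective (s.proj j)).choose
  have hlift s j : (quotient C c).map (lift s j) = s.proj j :=
    ((quotient C c).map_surjective (s.proj j)).choose_spec
  have fac s j : Fan.IsLimit.lift hP (lift s) ≫ π j = lift s j := Fan.IsLimit.fac hP _ j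
  Fan.IsLimit.mk _ (fun s => (quotient C c).map (Fan.IsLimit.lift hP (lift s)))
    (fun s j =>
      ((quotient C c).map_comp _ _).symm.trans ((congrArg _ (fac s j)).trans (hlift s j)))
    (fun s m hm => by
      obtain ⟨m, rfl⟩ := (quotient C c).map_surjective m
      refine eq_of_homotopy _ _ (Homotopy.ofIsLimitFan hπ fun j => homotopyOfEq _ _ ?_)
      rw [Functor.map_comp, fac, hlift, ← hm j]
      rfl)

instance HomotopyCategory.preservesLimitsOfShape_discrete_quotient
    [HasLimitsOfShape (Discrete J) C] :
    PreservesLimitsOfShape (Discrete J) (quotient C c) :=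
  have (f : J → HomologicalComplex C c) : PreservesLimit (Discrete.functor f) (quotient C c) :=
    preservesLimit_of_preserves_limit_cone (productIsProduct f)
      ((isLimitMapConeFanMkEquiv _ _ _).symm (isLimitFanMkQuotientMap fun i =>
        (isLimitMapConeFanMkEquiv _ _ _) (isLimitOfPreserves (eval C c i) (productIsProduct f))))
  preservesLimitsOfShape_of_discrete _

end QuotientPreservesProducts

namespace HomologicalComplex

open ZeroObject

variable {C : Type*} [Category C] [HasZeroObject C] {ι : Type*} [DecidableEq ι]
  {c : ComplexShape ι}

section HasZeroMorphisms

variable [HasZeroMorphisms C] (X : HomologicalComplex C c) (m : ι)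

noncomputable def eraseDegree : HomologicalComplex C c where
  X i := if i = m then 0 else X.X i
  d i j := if h : i ≠ m ∧ j ≠ m then
      eqToHom (if_neg h.1) ≫ X.d i j ≫ eqToHom (if_neg h.2).symm else 0
  shape i j hij := by rw [X.shape i j hij]; simp
  d_comp_d' i j k _ _ := by
    by_cases hi : i = m <;> by_cases hj : j = m <;> by_cases hk : k = m <;> simp [hi, hj, hk]

lemma isZero_eraseDegree_X_self : IsZero ((X.eraseDegree m).X m) := by
  simpa [eraseDegree] using Limits.isZero_zero C

lemma isZero_eraseDegree_X {i : ι} (hi : i ≠ m → IsZero (X.X i)) :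
    IsZero ((X.eraseDegree m).X i) := by
  by_cases h : i = m
  · exact h ▸ X.isZero_eraseDegree_X_self m
  · simpa [eraseDegree, h] using hi h

variable {X m}

noncomputable def toEraseDegree (hd : ∀ j, X.d m j = 0) : X ⟶ X.eraseDegree m where
  f i := if h : i = m then 0 else eqToHom (if_neg h).symm
  comm' i j _ := by
    by_cases hj : j = m
    · subst hj
      apply (X.isZero_eraseDegree_X_self j).eq_of_tgt
    by_cases hi : i = m
    · subst hi
      simp only [eraseDegree, ne_eq, hj, ↓reduceDIte, not_true_eq_false, not_false_eq_true,
        and_true, hd, zero_comp]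
      exact zero_comp
    · simp [eraseDegree, hi, hj]

lemma isIso_toEraseDegree_f (hd : ∀ j, X.d m j = 0) {i : ι} (hi : i ≠ m) :
    IsIso ((toEraseDegree hd).f i) := by
  simp only [toEraseDegree, dif_neg hi]
  exact (eqToIso (if_neg hi).symm).isIso_hom

noncomputable def eraseDegreeShortComplex (hd : ∀ j, X.d m j = 0) :
    ShortComplex (HomologicalComplex C c) :=
  ShortComplex.mk (mkHomFromSingle (𝟙 (X.X m)) fun j _ => by simp [hd])
    (toEraseDegree hd) (by
      refine HomologicalComplex.hom_ext _ _ fun i => ?_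
      by_cases hi : i = m
      · subst hi
        simp [toEraseDegree]
      · exact (isZero_single_obj_X c m _ i hi).eq_of_src _ _)

end HasZeroMorphisms

variable [Preadditive C] {X : HomologicalComplex C c} {m : ι} (hd : ∀ j, X.d m j = 0)

noncomputable def eraseDegreeShortComplexSplitting (i : ι) :
    ((eraseDegreeShortComplex hd).map (eval C c i)).Splitting := by
  by_cases hi : i = m
  · subst hi
    refine .ofIsIsoOfIsZero _ ?_ (X.isZero_eraseDegree_X_self i)
    change IsIso ((eraseDegreeShortComplex hd).f.f i)
    simp only [eraseDegreeShortComplex, mkHomFromSingle_f, Category.comp_id]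
    infer_instance
  · exact .ofIsZeroOfIsIso _ (isZero_single_obj_X c m _ i hi) (isIso_toEraseDegree_f hd hi)

end HomologicalComplex

-- For `s = ∅` any `m` works, thanks to truncated subtraction.
lemma Finset.exists_forall_le_card_erase {α : Type*} [LinearOrder α] [Nonempty α]
    (s : Finset α) :
    ∃ m, (∀ i ∈ s, i ≤ m) ∧ (s.erase m).card = s.card - 1 := by
  rcases s.eq_empty_or_nonempty with rfl | hs
  · exact ⟨Classical.arbitrary α, by simp, by simp⟩
  · exact ⟨s.max' hs, s.le_max', Finset.card_erase_of_mem (s.max'_mem hs)⟩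

namespace CochainComplex

open HomologicalComplex

lemma d_eq_zero_of_forall_lt_isZero_X {C : Type*} [Category C] [HasZeroMorphisms C]
    {X : CochainComplex C ℤ} {m : ℤ}
    (hX : ∀ i, m < i → IsZero (X.X i)) (j : ℤ) : X.d m j = 0 := by
  by_cases h : m + 1 = j
  · exact (hX j (by omega)).eq_of_tgt _ _
  · exact X.shape m j h

variable {C : Type*} [Category C] [Preadditive C] [HasZeroObject C] [HasBinaryBiproducts C]

lemma exists_distTriang_single_eraseDegree (X : CochainComplex C ℤ) (m : ℤ)
    (hd : ∀ j, X.d m j = 0) :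
    ∃ (f : (HomotopyCategory.quotient C _).obj ((single C (ComplexShape.up ℤ) m).obj (X.X m)) ⟶
        (HomotopyCategory.quotient C _).obj X)
      (g : (HomotopyCategory.quotient C _).obj X ⟶
        (HomotopyCategory.quotient C _).obj (X.eraseDegree m))
      (h : (HomotopyCategory.quotient C _).obj (X.eraseDegree m) ⟶
        ((HomotopyCategory.quotient C _).obj ((single C (ComplexShape.up ℤ) m).obj (X.X m)))⟦1⟧),
      Triangle.mk f g h ∈ distTriang _ :=
  ⟨_, _, _, (HomotopyCategory.distinguished_iff_iso_trianglehOfDegreewiseSplit _).2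
    ⟨_, eraseDegreeShortComplexSplitting hd, ⟨Iso.refl _⟩⟩⟩

end CochainComplex

namespace Statement12

section ProdClosure

variable {K : Type u} [Category.{v} K] {S : Set K}

lemma mem_prodClosure_of_isLimit {J : Type v} {f : J → K} (hf : ∀ j, f j ∈ S) {P : K}
    {π : ∀ j, P ⟶ f j} (hP : IsLimit (Fan.mk P π)) : P ∈ prodClosure K S :=
  ⟨J, f, hf, P, π, ⟨hP⟩, 𝟙 P, 𝟙 P, Category.id_comp _⟩

lemma mem_prodClosure_of_retract {X Y : K} (h : Retract X Y) (hY : Y ∈ prodClosure K S) :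
    X ∈ prodClosure K S := by
  obtain ⟨J, f, hf, P, π, hP, s, r, hsr⟩ := hY
  exact ⟨J, f, hf, P, π, hP, h.i ≫ s, r ≫ h.r, by simp [reassoc_of% hsr]⟩

lemma map_obj_mem_prodClosure {A : Type*} [Category A] {J : Type v} {G B : A}
    [HasProduct fun _ : J => G] (F : A ⥤ K) [PreservesLimit (Discrete.functor fun _ : J => G) F]
    (hG : F.obj G ∈ S) (h : Retract B (∏ᶜ fun _ : J => G)) : F.obj B ∈ prodClosure K S :=
  mem_prodClosure_of_retract (h.map F)
    (mem_prodClosure_of_isLimit (fun _ => hG)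
      (isLimitFanMkObjOfIsLimit F _ _ (productIsProduct _)))

end ProdClosure

section

variable {A : Type u} [Category.{v} A] [Preadditive A] [HasZeroObject A]

open HomotopyCategory

lemma singleFunctor_obj_mem_prodClosure [HasProducts.{v} A] (G : A)
    (hG : ∀ X : A, ∃ (J : Type v) (s : X ⟶ ∏ᶜ fun _ : J => G) (r : (∏ᶜ fun _ : J => G) ⟶ X),
      s ≫ r = 𝟙 X) (m : ℤ) (B : A) :
    (singleFunctor A m).obj B ∈
      prodClosure _ (Set.range fun n : ℤ => ((singleFunctor A 0).obj G)⟦n⟧) := by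
  obtain ⟨J, s, r, hsr⟩ := hG B
  have : PreservesLimitsOfShape (Discrete J) (singleFunctor A 0) :=
    inferInstanceAs (PreservesLimitsOfShape _ (HomologicalComplex.single A _ 0 ⋙ quotient A _))
  exact mem_prodClosure_of_retract
    (((singleFunctors A).shiftIso (-m) m 0 (by omega)).app B).symm.retract
    (map_obj_mem_prodClosure (singleFunctor A 0 ⋙ shiftFunctor _ (-m)) ⟨-m, rfl⟩ ⟨s, r, hsr⟩)

variable [HasBinaryBiproducts A]

theorem quotient_obj_mem_Prd_of_card_support_le
    {S : Set (HomotopyCategory A (ComplexShape.up ℤ))}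
    (hS : ∀ m B, (singleFunctor A m).obj B ∈ prodClosure _ S) (n : ℕ) (X : CochainComplex A ℤ)
    (s : Finset ℤ) (hs : s.card ≤ n + 1) (hX : ∀ i ∉ s, IsZero (X.X i)) :
    (quotient A _).obj X ∈ Prd _ S n := by
  obtain ⟨m, hm, hcard⟩ := s.exists_forall_le_card_erase
  obtain ⟨f, g, h, hT⟩ := X.exists_distTriang_single_eraseDegree m
    (CochainComplex.d_eq_zero_of_forall_lt_isZero_X fun i hi =>
      hX i fun his => (hm i his).not_gt hi)
  have hZ : ∀ i ∉ s.erase m, IsZero ((X.eraseDegree m).X i) := fun i hi =>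
    X.isZero_eraseDegree_X m fun him => hX i fun his => hi (Finset.mem_erase.2 ⟨him, his⟩)
  cases n with
  | zero =>
    have hempty : s.erase m = ∅ := Finset.card_eq_zero.1 (by omega)
    have hZ0 : IsZero ((quotient A _).obj (X.eraseDegree m)) :=
      Functor.map_isZero _ ((IsZero.iff_id_eq_zero _).2
        (HomologicalComplex.hom_ext _ _ fun i => (hZ i (by simp [hempty])).eq_of_src _ _))
    have : IsIso f := (Triangle.isZero₃_iff_isIso₁ _ hT).1 hZ0
    exact mem_prodClosure_of_retract (asIso f).symm.retract (hS m _)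
  | succ n =>
    exact ⟨_, _, f, g, h, hT, hS m _,
      quotient_obj_mem_Prd_of_card_support_le hS n _ (s.erase m) (by omega) hZ⟩

end

theorem statement12_general (A : Type u) [Category.{v} A] [Preadditive A] [HasZeroObject A]
    [HasBinaryBiproducts A] [HasProducts.{v} A]
    (G : A)
    (hG : ∀ X : A, ∃ (J : Type v) (s : X ⟶ ∏ᶜ fun _ : J => G) (r : (∏ᶜ fun _ : J => G) ⟶ X),
      s ≫ r = 𝟙 X)
    (S : Set (HomotopyCategory A (ComplexShape.up ℤ)))
    (hS : S = Set.range (fun n : ℤ =>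
      ((HomotopyCategory.quotient A (ComplexShape.up ℤ)).obj
        ((HomologicalComplex.single A (ComplexShape.up ℤ) 0).obj G))⟦n⟧))
    (n : ℕ) (X : CochainComplex A ℤ)
    (hX : ∃ s : Finset ℤ, s.card ≤ n + 1 ∧ ∀ i ∉ s, IsZero (X.X i)) :
    (HomotopyCategory.quotient A (ComplexShape.up ℤ)).obj X ∈
      Prd (HomotopyCategory A (ComplexShape.up ℤ)) S n := by
  obtain ⟨s, hs, hX⟩ := hX
  subst hS
  exact quotient_obj_mem_Prd_of_card_support_le (singleFunctor_obj_mem_prodClosure G hG)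
    n X s hs hX

/-- Let `A` be an additive category with products and split idempotents,
possessing a product generator `G`, and let `S = {G[n] : n ∈ ℤ}` in `K(A)`. Then every
bounded complex over `A` with at most `n + 1` nonzero entries lies in `Prdₙ(S)`. -/
theorem statement12 (A : Type u) [Category.{v} A] [Preadditive A] [HasZeroObject A]
    [HasBinaryBiproducts A] [HasProducts.{v} A] [IsIdempotentComplete A]
    (G : A)
    (hG : ∀ X : A, ∃ (J : Type v) (s : X ⟶ ∏ᶜ fun _ : J => G) (r : (∏ᶜ fun _ : J => G) ⟶ X),
      s ≫ r = 𝟙 X)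
    (S : Set (HomotopyCategory A (ComplexShape.up ℤ)))
    (hS : S = Set.range (fun n : ℤ =>
      ((HomotopyCategory.quotient A (ComplexShape.up ℤ)).obj
        ((HomologicalComplex.single A (ComplexShape.up ℤ) 0).obj G))⟦n⟧))
    (n : ℕ) (X : CochainComplex A ℤ)
    (hX : ∃ s : Finset ℤ, s.card ≤ n + 1 ∧ ∀ i ∉ s, IsZero (X.X i)) :
    (HomotopyCategory.quotient A (ComplexShape.up ℤ)).obj X ∈
      Prd (HomotopyCategory A (ComplexShape.up ℤ)) S n :=
  statement12_general A G hG S hS n X hX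

end Statement12
end
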